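/- Let f_1,…,f_m ∈ ℝ[x_1,…,x_n] satisfy the regularity hypothesis. Let z ∈ ℝⁿ and let σ ∈ {<,=,>}^m be the sign condition with f_i(z) σ_i 0 for all i. Then every σ̂ ∈ {<,=,>}^m with σ̂_i = σ_i for every i such that σ_i ≠ '=' is feasible, i.e., there exists w ∈ ℝⁿ with f_i(w) σ̂_i 0 for all i = 1,…,m. -/

import Mathlib

open MvPolynomial

/-- A sign symbol among `<, =, >`. -/
inductive Sign3 | lt | eq | gt
deriving DecidableEq

/-- The relation "`t σ 0`" for a sign symbol `σ`. -/
def Sign3.holds : Sign3 → ℝ → Prop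
  | .lt, t => t < 0
  | .eq, t => t = 0
  | .gt, t => 0 < t

/-- The regularity hypothesis: for every `x ∈ ℂⁿ` and every subset `S` of the indices,
if all `f_i`, `i ∈ S`, vanish at `x`, then their gradients at `x` are linearly
independent over `ℂ`. -/
def RegHyp {n m : ℕ} (f : Fin m → MvPolynomial (Fin n) ℝ) : Prop :=
  ∀ (x : Fin n → ℂ) (S : Set (Fin m)),
    (∀ i ∈ S, eval x ((f i).map (algebraMap ℝ ℂ)) = 0) →
    LinearIndependent ℂ
      (fun i : S => fun k : Fin n => eval x (pderiv k ((f i.1).map (algebraMap ℝ ℂ))))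

/-!
The polynomials vanishing at `z` have linearly independent real gradients there (the regularity
hypothesis read at the real point `z`), so their joint polynomial map is a submersion at `z` and
hence open at `z`. Every small vector `t • (±1 or 0)` with the prescribed signs is therefore a value
of that map at points arbitrarily close to `z`, where the polynomials not vanishing at `z` keep
their signs.
-/

open Filter Topology

theorem Matrix.mulVec_surjective_of_linearIndependent_row {K m n : Type*} [Field K]
    [Fintype m] [Fintype n] {A : Matrix m n K} (hA : LinearIndependent K A.row) :
    Function.Surjective A.mulVec := by
  rw [← Matrix.coe_mulVecLin, ← LinearMap.range_eq_top]
  apply Submodule.eq_top_of_finrank_eq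
  rw [Module.finrank_fintype_fun_eq_card]
  exact hA.rank_matrix

namespace MvPolynomial

variable {𝕜 σ : Type*} [NontriviallyNormedField 𝕜] [Fintype σ]

theorem hasStrictFDerivAt_eval (p : MvPolynomial σ 𝕜) (z : σ → 𝕜) :
    HasStrictFDerivAt (fun x => eval x p)
      (∑ k, eval z (pderiv k p) • (ContinuousLinearMap.proj k : (σ → 𝕜) →L[𝕜] 𝕜)) z := by
  classical
  induction p using MvPolynomial.induction_on with
  | C a =>
    simp only [eval_C]
    exact (hasStrictFDerivAt_const a z).congr_fderiv (by ext v; simp)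
  | add p q hp hq =>
    simp only [map_add]
    exact (hp.add hq).congr_fderiv (by ext v; simp [add_mul, Finset.sum_add_distrib])
  | mul_X p k hp =>
    simp only [map_mul, eval_X]
    refine (hp.mul (hasStrictFDerivAt_apply k z)).congr_fderiv ?_
    ext v
    simp [Pi.single_apply, apply_ite, add_mul, mul_assoc, Finset.sum_add_distrib, Finset.mul_sum]

theorem map_nhds_eq_of_linearIndependent_pderiv [CompleteSpace 𝕜] {ι : Type*} [Fintype ι]
    (p : ι → MvPolynomial σ 𝕜) (z : σ → 𝕜)
    (hp : LinearIndependent 𝕜 fun i k => eval z (pderiv k (p i))) :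
    Filter.map (fun x i => eval x (p i)) (𝓝 z) = 𝓝 fun i => eval z (p i) := by
  set D : (σ → 𝕜) →L[𝕜] ι → 𝕜 := ContinuousLinearMap.pi fun i =>
    ∑ k, eval z (pderiv k (p i)) • ContinuousLinearMap.proj k
  refine HasStrictFDerivAt.map_nhds_eq_of_surj (f' := D)
    (hasStrictFDerivAt_pi.2 fun i => hasStrictFDerivAt_eval (p i) z) ?_
  rw [LinearMap.range_eq_top]
  intro y
  obtain ⟨v, hv⟩ := Matrix.mulVec_surjective_of_linearIndependent_row
    (A := Matrix.of fun i k => eval z (pderiv k (p i))) hp y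
  refine ⟨v, ?_⟩
  ext i
  simp [D, ← hv, Matrix.mulVec, dotProduct]

end MvPolynomial

theorem RegHyp.linearIndependent_pderiv {n m : ℕ} {f : Fin m → MvPolynomial (Fin n) ℝ}
    (hreg : RegHyp f) {x : Fin n → ℝ} {S : Set (Fin m)} (hS : ∀ i ∈ S, eval x (f i) = 0) :
    LinearIndependent ℝ fun (i : S) k => eval x (pderiv k (f i)) := by
  have eval_map_real (p : MvPolynomial (Fin n) ℝ) :
      eval (algebraMap ℝ ℂ ∘ x) (p.map (algebraMap ℝ ℂ)) = algebraMap ℝ ℂ (eval x p) := by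
    rw [eval_map, eval₂_comp]
  have h := hreg (algebraMap ℝ ℂ ∘ x) S fun i hi => by rw [eval_map_real, hS i hi, map_zero]
  simp only [pderiv_map, eval_map_real] at h
  exact linearIndependent_algebraMap_comp_iff.1 h

namespace Sign3

def toReal : Sign3 → ℝ
  | lt => -1
  | eq => 0
  | gt => 1

theorem holds_mul_toReal (s : Sign3) {t : ℝ} (ht : 0 < t) : s.holds (t * s.toReal) := by
  cases s <;> simp [holds, toReal, ht]

theorem eventually_holds {α : Type*} [TopologicalSpace α] {g : α → ℝ} {a : α}
    (hg : ContinuousAt g a) {s : Sign3} (hs : s ≠ eq) (h : s.holds (g a)) :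
    ∀ᶠ x in 𝓝 a, s.holds (g x) := by
  cases s
  · exact hg.eventually_lt continuousAt_const h
  · exact absurd rfl hs
  · exact continuousAt_const.eventually_lt hg h

end Sign3

theorem statement6 (n m : ℕ) (f : Fin m → MvPolynomial (Fin n) ℝ) (hreg : RegHyp f)
    (z : Fin n → ℝ) (σ : Fin m → Sign3) (hσ : ∀ i, (σ i).holds (eval z (f i)))
    (σ' : Fin m → Sign3) (hσ' : ∀ i, σ i ≠ Sign3.eq → σ' i = σ i) :
    ∃ w : Fin n → ℝ, ∀ i, (σ' i).holds (eval w (f i)) := by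
  set S : Set (Fin m) := {i | σ i = .eq}
  set F : (Fin n → ℝ) → S → ℝ := fun x i => eval x (f i)
  set U : Set (Fin n → ℝ) := {x | ∀ i, σ i ≠ .eq → (σ i).holds (eval x (f i))}
  have hU : U ∈ 𝓝 z := eventually_all.2 fun i => eventually_imp_distrib_left.2 fun hi =>
    Sign3.eventually_holds (MvPolynomial.hasStrictFDerivAt_eval (f i) z).continuousAt hi (hσ i)
  have hzero : ∀ i ∈ S, eval z (f i) = 0 := fun i (hi : σ i = .eq) => by
    simpa [hi, Sign3.holds] using hσ i
  have hFU : F '' U ∈ 𝓝 0 := by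
    have hFz : F z = 0 := funext fun i => hzero i i.2
    rw [← hFz, ← MvPolynomial.map_nhds_eq_of_linearIndependent_pderiv _ z
      (hreg.linearIndependent_pderiv hzero)]
    exact image_mem_map hU
  have hc : Tendsto (fun t : ℝ => fun i : S => t * (σ' i).toReal) (𝓝[>] 0) (𝓝 0) :=
    ((continuous_pi fun _ => continuous_id.mul continuous_const).tendsto' 0 0
      (funext fun _ => zero_mul _)).mono_left nhdsWithin_le_nhds
  obtain ⟨t, ⟨w, hwU, hFw⟩, ht⟩ := ((hc.eventually hFU).and self_mem_nhdsWithin).exists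
  refine ⟨w, fun i => ?_⟩
  by_cases hi : σ i = .eq
  · rw [show eval w (f i) = _ from congrFun hFw ⟨i, hi⟩]
    exact Sign3.holds_mul_toReal _ ht
  · rw [hσ' i hi]
    exact hwU i hi
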